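/- Curvature bracket of the filtered deformation in the non-supergravity branch: let φ ∈ ℝ⁵ with components φ_μ (raised indices φ^μ := η^{μμ} φ_μ, and φ² := Σ_μ φ_μ φ^μ) and let r be a traceless 2×2 complex matrix with r² = −2·1. For pairs s = (s¹, s²) of vectors in ℂ⁴ define (β_μ s)ᴬ := −(1/8) Σ_ν φ^ν (Γ_μ Γ_ν + 3 Γ_ν Γ_μ) r^A{}_B sᴮ. Then for all μ, ν ∈ Fin 5, each A ∈ {1,2} and every pair s: β_μ(β_ν s)ᴬ − β_ν(β_μ s)ᴬ = (1/4) Σ_{σ,τ} ρ_{μνστ} Γ^{στ} sᴬ, where ρ_{μνστ} := φ² η_{μ[σ} η_{τ]ν} − φ_μ φ_{[σ} η_{τ]ν} + φ_ν φ_{[σ} η_{τ]μ} and X_{[σ} Y_{τ]} := (1/2)(X_σ Y_τ − X_τ Y_σ). -/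
import Mathlib


open Matrix

noncomputable section

/-- The mostly-minus Minkowski metric η = diag(1,−1,−1,−1,−1) (equal to its own inverse). -/
def eta (μ ν : Fin 5) : ℂ := if μ = ν then (if μ = 0 then 1 else -1) else 0

/-- The same metric, real-valued. -/
def etaR (μ ν : Fin 5) : ℝ := if μ = ν then (if μ = 0 then 1 else -1) else 0

/-- Γ_{μν} := (1/2)(Γ_μ Γ_ν − Γ_ν Γ_μ). -/
def comm2 (Γ : Fin 5 → Matrix (Fin 4) (Fin 4) ℂ) (μ ν : Fin 5) : Matrix (Fin 4) (Fin 4) ℂ :=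
  (1/2 : ℂ) • (Γ μ * Γ ν - Γ ν * Γ μ)

/-- (β_μ s)ᴬ := −(1/8) Σ_ν φ^ν (Γ_μ Γ_ν + 3 Γ_ν Γ_μ) r^A{}_B sᴮ. -/
def betaP (Γ : Fin 5 → Matrix (Fin 4) (Fin 4) ℂ) (φ : Fin 5 → ℝ)
    (r : Matrix (Fin 2) (Fin 2) ℂ) (μ : Fin 5) (s : Fin 2 → Fin 4 → ℂ) (A : Fin 2) :
    Fin 4 → ℂ :=
  (-(1/8) : ℂ) • ∑ ν, ∑ B,
    ((etaR ν ν * φ ν : ℝ) : ℂ) • (r A B • ((Γ μ * Γ ν + (3 : ℂ) • (Γ ν * Γ μ)) *ᵥ s B))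

/-- ρ_{μνστ} := φ² η_{μ[σ} η_{τ]ν} − φ_μ φ_{[σ} η_{τ]ν} + φ_ν φ_{[σ} η_{τ]μ}. -/
def rhoP (φ : Fin 5 → ℝ) (μ ν σ τ : Fin 5) : ℝ :=
  (∑ α, φ α * (etaR α α * φ α)) * ((1/2 : ℝ) * (etaR μ σ * etaR τ ν - etaR μ τ * etaR σ ν))
    - φ μ * ((1/2 : ℝ) * (φ σ * etaR τ ν - φ τ * etaR σ ν))
    + φ ν * ((1/2 : ℝ) * (φ σ * etaR τ μ - φ τ * etaR σ μ))

namespace CAux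

lemma eta_eq (μ ν : Fin 5) : eta μ ν = ((etaR μ ν : ℝ) : ℂ) := by
  simp only [eta, etaR]; split_ifs <;> norm_num

lemma etaR_mul_self (μ : Fin 5) : etaR μ μ * etaR μ μ = 1 := by
  simp only [etaR, if_pos rfl]; split_ifs <;> norm_num

lemma etaR_off {μ ν : Fin 5} (h : μ ≠ ν) : etaR μ ν = 0 := by
  simp [etaR, h]

variable (Γ : Fin 5 → Matrix (Fin 4) (Fin 4) ℂ) (φ : Fin 5 → ℝ)

def Fm : Matrix (Fin 4) (Fin 4) ℂ := ∑ α, ((etaR α α * φ α : ℝ) : ℂ) • Γ α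

def Mm (μ : Fin 5) : Matrix (Fin 4) (Fin 4) ℂ :=
  ∑ ν, ((etaR ν ν * φ ν : ℝ) : ℂ) • (Γ μ * Γ ν + (3 : ℂ) • (Γ ν * Γ μ))

variable (hC : ∀ μ ν, Γ μ * Γ ν + Γ ν * Γ μ = (2 * eta μ ν) • (1 : Matrix (Fin 4) (Fin 4) ℂ))

include hC in
lemma GammaF (μ : Fin 5) :
    Γ μ * Fm Γ φ + Fm Γ φ * Γ μ = (2 * (φ μ : ℂ)) • 1 := by
  unfold Fm
  rw [Finset.mul_sum, Finset.sum_mul, ← Finset.sum_add_distrib]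
  have h1 : ∀ ν ∈ Finset.univ,
      Γ μ * (((etaR ν ν * φ ν : ℝ) : ℂ) • Γ ν) + (((etaR ν ν * φ ν : ℝ) : ℂ) • Γ ν) * Γ μ
      = (if ν = μ then (2 * (φ μ : ℂ)) else 0) • (1 : Matrix (Fin 4) (Fin 4) ℂ) := by
    intro ν _
    rw [Matrix.mul_smul, Matrix.smul_mul, ← smul_add, hC, smul_smul]
    congr 1
    rcases eq_or_ne ν μ with h | h
    · subst h
      rw [if_pos rfl, eta_eq]
      push_cast
      have := etaR_mul_self ν
      have hc : ((etaR ν ν : ℝ) : ℂ) * ((etaR ν ν : ℝ) : ℂ) = 1 := by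
        rw [← Complex.ofReal_mul, this]; norm_num
      linear_combination (2 * (φ ν : ℂ)) * hc
    · rw [if_neg h, eta_eq, etaR_off (Ne.symm h)]
      norm_num
  rw [Finset.sum_congr rfl h1]
  simp


include hC in
lemma GammaF' (μ : Fin 5) :
    Γ μ * Fm Γ φ = (2 * (φ μ : ℂ)) • 1 - Fm Γ φ * Γ μ :=
  eq_sub_of_add_eq (GammaF Γ φ hC μ)

include hC in
lemma Fsq : Fm Γ φ * Fm Γ φ
    = ((∑ α, φ α * (etaR α α * φ α) : ℝ) : ℂ) • (1 : Matrix (Fin 4) (Fin 4) ℂ) := by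
  have key : Fm Γ φ * Fm Γ φ + Fm Γ φ * Fm Γ φ
      = ((2 : ℂ) * ((∑ α, φ α * (etaR α α * φ α) : ℝ) : ℂ)) • 1 := by
    conv_lhs => rw [show Fm Γ φ * Fm Γ φ + Fm Γ φ * Fm Γ φ
      = (∑ α, ((etaR α α * φ α : ℝ) : ℂ) • Γ α) * Fm Γ φ
        + Fm Γ φ * (∑ α, ((etaR α α * φ α : ℝ) : ℂ) • Γ α) from rfl]
    rw [Finset.sum_mul, Finset.mul_sum, ← Finset.sum_add_distrib]
    have h1 : ∀ α ∈ Finset.univ,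
        (((etaR α α * φ α : ℝ) : ℂ) • Γ α) * Fm Γ φ
          + Fm Γ φ * (((etaR α α * φ α : ℝ) : ℂ) • Γ α)
        = (((etaR α α * φ α : ℝ) : ℂ) * (2 * (φ α : ℂ))) • (1 : Matrix (Fin 4) (Fin 4) ℂ) := by
      intro α _
      rw [Matrix.smul_mul, Matrix.mul_smul, ← smul_add, GammaF Γ φ hC α, smul_smul]
    rw [Finset.sum_congr rfl h1, ← Finset.sum_smul]
    congr 1
    push_cast
    rw [Finset.mul_sum]
    exact Finset.sum_congr rfl (by intros; ring)
  have h2 : (2 : ℂ) • (Fm Γ φ * Fm Γ φ)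
      = (2 : ℂ) • (((∑ α, φ α * (etaR α α * φ α) : ℝ) : ℂ) • (1 : Matrix (Fin 4) (Fin 4) ℂ)) := by
    rw [two_smul, key, smul_smul]
  exact smul_right_injective _ two_ne_zero h2


include hC in
lemma Mm_eq (μ : Fin 5) :
    Mm Γ φ μ = (2 * (φ μ : ℂ)) • 1 + (2 : ℂ) • (Fm Γ φ * Γ μ) := by
  unfold Mm
  have h1 : ∀ ν ∈ Finset.univ,
      ((etaR ν ν * φ ν : ℝ) : ℂ) • (Γ μ * Γ ν + (3 : ℂ) • (Γ ν * Γ μ))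
      = (if ν = μ then (2 * (φ μ : ℂ)) else 0) • (1 : Matrix (Fin 4) (Fin 4) ℂ)
        + (2 : ℂ) • ((((etaR ν ν * φ ν : ℝ) : ℂ) • Γ ν) * Γ μ) := by
    intro ν _
    have expand : Γ μ * Γ ν + (3 : ℂ) • (Γ ν * Γ μ)
        = (Γ μ * Γ ν + Γ ν * Γ μ) + (2 : ℂ) • (Γ ν * Γ μ) := by module
    rw [expand, hC, smul_add]
    congr 1
    · rw [smul_smul]
      congr 1
      rcases eq_or_ne ν μ with h | h
      · subst h
        rw [if_pos rfl, eta_eq]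
        have hc : ((etaR ν ν : ℝ) : ℂ) * ((etaR ν ν : ℝ) : ℂ) = 1 := by
          rw [← Complex.ofReal_mul, etaR_mul_self]; norm_num
        push_cast
        linear_combination (2 * (φ ν : ℂ)) * hc
      · rw [if_neg h, eta_eq, etaR_off (Ne.symm h)]
        norm_num
    · rw [Matrix.smul_mul, smul_comm]
  rw [Finset.sum_congr rfl h1, Finset.sum_add_distrib]
  congr 1
  · simp
  · rw [← Finset.smul_sum, ← Finset.sum_mul]
    rfl

include hC in
lemma XY (μ ν : Fin 5) :
    (Fm Γ φ * Γ μ) * (Fm Γ φ * Γ ν)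
      = (2 * (φ μ : ℂ)) • (Fm Γ φ * Γ ν)
        - ((∑ α, φ α * (etaR α α * φ α) : ℝ) : ℂ) • (Γ μ * Γ ν) := by
  have h : (Fm Γ φ * Γ μ) * (Fm Γ φ * Γ ν) = Fm Γ φ * ((Γ μ * Fm Γ φ) * Γ ν) := by
    noncomm_ring
  rw [h, GammaF' Γ φ hC μ, Matrix.sub_mul, Matrix.mul_sub, Matrix.smul_mul, Matrix.one_mul,
    Matrix.mul_smul]
  congr 1
  rw [show Fm Γ φ * (Fm Γ φ * Γ μ * Γ ν) = (Fm Γ φ * Fm Γ φ) * (Γ μ * Γ ν) by noncomm_ring,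
    Fsq Γ φ hC, Matrix.smul_mul, Matrix.one_mul]

include hC in
lemma Kcomm (μ ν : Fin 5) :
    Mm Γ φ μ * Mm Γ φ ν - Mm Γ φ ν * Mm Γ φ μ
      = (8 * (φ μ : ℂ)) • (Fm Γ φ * Γ ν) - (8 * (φ ν : ℂ)) • (Fm Γ φ * Γ μ)
        - ((8 : ℂ) * ((∑ α, φ α * (etaR α α * φ α) : ℝ) : ℂ)) • comm2 Γ μ ν := by
  rw [Mm_eq Γ φ hC μ, Mm_eq Γ φ hC ν]
  have e1 := XY Γ φ hC μ ν
  have e2 := XY Γ φ hC ν μ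
  rw [comm2]
  simp only [Matrix.add_mul, Matrix.mul_add, Matrix.smul_mul, Matrix.mul_smul, Matrix.one_mul,
    Matrix.mul_one, smul_smul]
  rw [e1, e2]
  module


include hC in
lemma Gsum (μ : Fin 5) :
    ∑ σ, ((etaR σ σ * φ σ : ℝ) : ℂ) • comm2 Γ σ μ
      = Fm Γ φ * Γ μ - ((φ μ : ℝ) : ℂ) • 1 := by
  have hA : ∑ σ, ((etaR σ σ * φ σ : ℝ) : ℂ) • (Γ σ * Γ μ) = Fm Γ φ * Γ μ := by
    rw [Fm, Finset.sum_mul]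
    exact Finset.sum_congr rfl fun σ _ => (Matrix.smul_mul _ _ _).symm
  have hB : ∑ σ, ((etaR σ σ * φ σ : ℝ) : ℂ) • (Γ μ * Γ σ) = Γ μ * Fm Γ φ := by
    rw [Fm, Finset.mul_sum]
    exact Finset.sum_congr rfl fun σ _ => (Matrix.mul_smul _ _ _).symm
  have step : ∑ σ, ((etaR σ σ * φ σ : ℝ) : ℂ) • comm2 Γ σ μ
      = (1/2 : ℂ) • ((∑ σ, ((etaR σ σ * φ σ : ℝ) : ℂ) • (Γ σ * Γ μ))
          - (∑ σ, ((etaR σ σ * φ σ : ℝ) : ℂ) • (Γ μ * Γ σ))) := by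
    rw [smul_sub, Finset.smul_sum, Finset.smul_sum, ← Finset.sum_sub_distrib]
    refine Finset.sum_congr rfl fun σ _ => ?_
    rw [comm2]
    module
  rw [step, hA, hB, GammaF' Γ φ hC μ]
  module


lemma rhosum0 (μ ν : Fin 5) :
    ∑ σ, ∑ τ, ((rhoP φ μ ν σ τ : ℝ) : ℂ) • ((eta σ σ * eta τ τ) • comm2 Γ σ τ)
      = ((∑ α, φ α * (etaR α α * φ α) : ℝ) : ℂ) • comm2 Γ μ ν
        - ((φ μ : ℝ) : ℂ) • (∑ σ, ((etaR σ σ * φ σ : ℝ) : ℂ) • comm2 Γ σ ν)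
        + ((φ ν : ℝ) : ℂ) • (∑ σ, ((etaR σ σ * φ σ : ℝ) : ℂ) • comm2 Γ σ μ) := by
  obtain ⟨E, hE, hE2⟩ : ∃ E : Fin 5 → ℂ,
      (∀ a b, ((etaR a b : ℝ) : ℂ) = if a = b then E b else 0) ∧ (∀ b, E b * E b = 1) := by
    refine ⟨fun b => ((etaR b b : ℝ) : ℂ), fun a b => ?_, fun b => ?_⟩
    · simp only [etaR]
      split_ifs with h h2 h3 <;> first | rfl | (subst h; simp_all)
    · rw [← Complex.ofReal_mul]
      simp only [etaR, if_pos rfl]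
      split_ifs <;> norm_num
  simp only [rhoP, eta_eq]
  push_cast
  simp only [hE, sub_mul, add_mul, mul_sub, mul_add, sub_smul, add_smul, smul_smul,
    Finset.sum_add_distrib, Finset.sum_sub_distrib, mul_ite, ite_mul, mul_zero, zero_mul,
    one_mul, mul_one, ite_smul, zero_smul, Finset.sum_ite_eq, Finset.sum_ite_eq',
    Finset.mem_univ, if_true, Finset.smul_sum, Finset.sum_ite_irrel, Finset.sum_const_zero]
  have hsw : ∀ a b, comm2 Γ b a = -comm2 Γ a b := fun a b => by
    rw [comm2, comm2, ← smul_neg, neg_sub]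
  have k1 : ((∑ x : Fin 5, ↑(φ x) * (E x * ↑(φ x))) * (1 / 2 * (E μ * E ν)) * (E μ * E ν)) • comm2 Γ μ ν
        - ((∑ x : Fin 5, ↑(φ x) * (E x * ↑(φ x))) * (1 / 2 * (E μ * E ν)) * (E ν * E μ)) • comm2 Γ ν μ
      = (∑ x : Fin 5, ↑(φ x) * (E x * ↑(φ x))) • comm2 Γ μ ν := by
    rw [hsw μ ν, smul_neg, sub_neg_eq_add, ← add_smul]
    congr 1
    linear_combination (∑ x : Fin 5, (φ x : ℂ) * (E x * (φ x : ℂ))) * (E ν * E ν) * hE2 μ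
      + (∑ x : Fin 5, (φ x : ℂ) * (E x * (φ x : ℂ))) * hE2 ν
  have k2 : (∑ x : Fin 5, (↑(φ μ) * (1 / 2 * (↑(φ x) * E ν)) * (E x * E ν)) • comm2 Γ x ν)
        - (∑ x : Fin 5, (↑(φ μ) * (1 / 2 * (↑(φ x) * E ν)) * (E ν * E x)) • comm2 Γ ν x)
      = ∑ x : Fin 5, (↑(φ μ) * (E x * ↑(φ x))) • comm2 Γ x ν := by
    rw [← Finset.sum_sub_distrib]
    refine Finset.sum_congr rfl fun x _ => ?_
    rw [hsw x ν, smul_neg, sub_neg_eq_add, ← add_smul]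
    congr 1
    linear_combination ((φ μ : ℂ) * (φ x : ℂ) * E x) * hE2 ν
  have k3 : (∑ x : Fin 5, (↑(φ ν) * (1 / 2 * (↑(φ x) * E μ)) * (E x * E μ)) • comm2 Γ x μ)
        - (∑ x : Fin 5, (↑(φ ν) * (1 / 2 * (↑(φ x) * E μ)) * (E μ * E x)) • comm2 Γ μ x)
      = ∑ x : Fin 5, (↑(φ ν) * (E x * ↑(φ x))) • comm2 Γ x μ := by
    rw [← Finset.sum_sub_distrib]
    refine Finset.sum_congr rfl fun x _ => ?_
    rw [hsw x μ, smul_neg, sub_neg_eq_add, ← add_smul]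
    congr 1
    linear_combination ((φ ν : ℂ) * (φ x : ℂ) * E x) * hE2 μ
  rw [k1, k2, k3]

include hC in
lemma rhosum (μ ν : Fin 5) :
    ∑ σ, ∑ τ, ((rhoP φ μ ν σ τ : ℝ) : ℂ) • ((eta σ σ * eta τ τ) • comm2 Γ σ τ)
      = ((∑ α, φ α * (etaR α α * φ α) : ℝ) : ℂ) • comm2 Γ μ ν
        - ((φ μ : ℝ) : ℂ) • (Fm Γ φ * Γ ν) + ((φ ν : ℝ) : ℂ) • (Fm Γ φ * Γ μ) := by
  rw [rhosum0 Γ φ μ ν, Gsum Γ φ hC ν, Gsum Γ φ hC μ]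
  module


lemma sum_mulVec' (M : Fin 5 → Matrix (Fin 4) (Fin 4) ℂ) (v : Fin 4 → ℂ) :
    (∑ i, M i) *ᵥ v = ∑ i, M i *ᵥ v := by
  ext j
  simp only [Matrix.mulVec, dotProduct, Finset.sum_apply, Matrix.sum_apply, Finset.sum_mul]
  exact Finset.sum_comm

lemma mulVec_sum' (M : Matrix (Fin 4) (Fin 4) ℂ) (f : Fin 2 → Fin 4 → ℂ) :
    M *ᵥ (∑ i, f i) = ∑ i, M *ᵥ f i := by
  ext j
  simp only [Matrix.mulVec, dotProduct, Finset.sum_apply, Finset.mul_sum]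
  exact Finset.sum_comm

lemma betaP_eq (r : Matrix (Fin 2) (Fin 2) ℂ) (μ : Fin 5) (s : Fin 2 → Fin 4 → ℂ) (A : Fin 2) :
    betaP Γ φ r μ s A = (-(1/8) : ℂ) • ∑ B, r A B • (Mm Γ φ μ *ᵥ s B) := by
  rw [betaP, Mm]
  congr 1
  rw [Finset.sum_comm]
  refine Finset.sum_congr rfl fun B _ => ?_
  rw [sum_mulVec', Finset.smul_sum]
  refine Finset.sum_congr rfl fun ν _ => ?_
  rw [Matrix.smul_mulVec]
  exact smul_comm _ _ _

lemma betaP_comp (r : Matrix (Fin 2) (Fin 2) ℂ)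
    (hr_sq : r * r = (-2 : ℂ) • (1 : Matrix (Fin 2) (Fin 2) ℂ))
    (μ ν : Fin 5) (A : Fin 2) (s : Fin 2 → Fin 4 → ℂ) :
    betaP Γ φ r μ (fun B => betaP Γ φ r ν s B) A
      = (-(1/32) : ℂ) • ((Mm Γ φ μ * Mm Γ φ ν) *ᵥ s A) := by
  have hkey : ∀ C, ∑ B, r A B * r B C = (-2 : ℂ) * (if A = C then 1 else 0) := by
    intro C
    rw [← Matrix.mul_apply, hr_sq]
    simp [Matrix.smul_apply, Matrix.one_apply]
  simp only [betaP_eq]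
  simp only [Matrix.mulVec_smul, mulVec_sum', Finset.smul_sum, smul_smul,
    Matrix.mulVec_mulVec]
  rw [Finset.sum_comm]
  have hcol : ∀ C, ∑ B, (-(1/8) * (r A B * (-(1/8) * r B C))) • ((Mm Γ φ μ * Mm Γ φ ν) *ᵥ s C)
      = ((1/64 : ℂ) * ∑ B, r A B * r B C) • ((Mm Γ φ μ * Mm Γ φ ν) *ᵥ s C) := by
    intro C
    rw [← Finset.sum_smul]
    congr 1
    rw [Finset.mul_sum]
    exact Finset.sum_congr rfl fun B _ => by ring
  simp only [hcol, hkey, mul_ite, mul_one, mul_zero, ite_smul, zero_smul,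
    Finset.sum_ite_eq, Finset.mem_univ, if_true]
  congr 1
  norm_num

end CAux

/-- Curvature bracket of the filtered deformation in the non-supergravity branch:
    β_μ(β_ν s)ᴬ − β_ν(β_μ s)ᴬ = (1/4) Σ_{σ,τ} ρ_{μνστ} Γ^{στ} sᴬ. -/
theorem curvature_bracket_nonsugra (Γ : Fin 5 → Matrix (Fin 4) (Fin 4) ℂ)
    (φ : Fin 5 → ℝ) (r : Matrix (Fin 2) (Fin 2) ℂ)
    (hC : ∀ μ ν, Γ μ * Γ ν + Γ ν * Γ μ = (2 * eta μ ν) • (1 : Matrix (Fin 4) (Fin 4) ℂ))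
    (hr_tr : r.trace = 0)
    (hr_sq : r * r = (-2 : ℂ) • (1 : Matrix (Fin 2) (Fin 2) ℂ))
    (μ ν : Fin 5) (A : Fin 2) (s : Fin 2 → Fin 4 → ℂ) :
    betaP Γ φ r μ (fun B => betaP Γ φ r ν s B) A
      - betaP Γ φ r ν (fun B => betaP Γ φ r μ s B) A
    = (1/4 : ℂ) • ∑ σ, ∑ τ,
        ((rhoP φ μ ν σ τ : ℝ) : ℂ) • ((eta σ σ * eta τ τ) • (comm2 Γ σ τ *ᵥ s A)) := by
  rw [CAux.betaP_comp Γ φ r hr_sq μ ν A s, CAux.betaP_comp Γ φ r hr_sq ν μ A s]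
  have hR : ∀ σ τ : Fin 5, ((rhoP φ μ ν σ τ : ℝ) : ℂ) • ((eta σ σ * eta τ τ) • (comm2 Γ σ τ *ᵥ s A))
      = (((rhoP φ μ ν σ τ : ℝ) : ℂ) • ((eta σ σ * eta τ τ) • comm2 Γ σ τ)) *ᵥ s A := by
    intro σ τ
    rw [Matrix.smul_mulVec, Matrix.smul_mulVec]
  simp only [hR]
  simp only [← CAux.sum_mulVec']
  have hmat : (-(1/32) : ℂ) • (CAux.Mm Γ φ μ * CAux.Mm Γ φ ν - CAux.Mm Γ φ ν * CAux.Mm Γ φ μ)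
      = (1/4 : ℂ) • ∑ σ, ∑ τ,
          ((rhoP φ μ ν σ τ : ℝ) : ℂ) • ((eta σ σ * eta τ τ) • comm2 Γ σ τ) := by
    rw [CAux.Kcomm Γ φ hC μ ν, CAux.rhosum Γ φ hC μ ν]
    module
  rw [← smul_sub, ← Matrix.sub_mulVec, ← Matrix.smul_mulVec, hmat,
    Matrix.smul_mulVec]
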